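/- arXiv:1410.7052 — 6 statements merged into one kernel-verified Lean document; each statement's English description precedes it below -/
import Mathlib

section
/- Let n ≥ 1 and let A be a real 4×n matrix. Let Δₙ denote the set of probability vectors in ℝⁿ, Δ₄ the set of probability vectors in ℝ⁴, and let P ⊆ Δ₄ be the set of product mixtures ((1−p₁)(1−p₂), (1−p₁)p₂, p₁(1−p₂), p₁p₂) over p₁, p₂ ∈ [0,1]. Then the upper value of the product-constrained game equals the value of the unconstrained game: the infimum over q ∈ Δₙ of the supremum over p ∈ P of pᵀ A q equals the supremum over p ∈ Δ₄ of the infimum over q ∈ Δₙ of pᵀ A q. -/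
/-!
Since `p₁, p₂ ∈ {0, 1}` give the four pure strategies, the product mixtures sit between the vertices
of `Δ₄` and `Δ₄` itself; a linear payoff has the same supremum `maxᵢ (A q)ᵢ` over all three sets.
Hence the constrained upper value equals the unconstrained one, which equals the lower value by
von Neumann's minimax theorem, obtained from a saddle point given by Sion's theorem.
-/

open Matrix

/-- The product mixture `((1−p₁)(1−p₂), (1−p₁)p₂, p₁(1−p₂), p₁p₂)` in `ℝ⁴`. -/
noncomputable def prodMix (p₁ p₂ : ℝ) : Fin 4 → ℝ :=
  ![(1 - p₁) * (1 - p₂), (1 - p₁) * p₂, p₁ * (1 - p₂), p₁ * p₂]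

/-- The set of product mixtures over `p₁, p₂ ∈ [0,1]`. -/
def productMixtures : Set (Fin 4 → ℝ) :=
  {p | ∃ p₁ ∈ Set.Icc (0 : ℝ) 1, ∃ p₂ ∈ Set.Icc (0 : ℝ) 1, p = prodMix p₁ p₂}

open Set

namespace IsSaddlePointOn

variable {E F : Type*} {X : Set E} {Y : Set F} {f : E → F → ℝ} {a : E} {b : F}

theorem ciInf_ciSup_eq (ha : a ∈ X) (hb : b ∈ Y) (h : IsSaddlePointOn X Y f a b)
    (hbdd : ∀ x ∈ X, BddAbove (range fun y : Y ↦ f x y)) :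
    ⨅ x : X, ⨆ y : Y, f x y = f a b := by
  have : Nonempty X := ⟨⟨a, ha⟩⟩
  have : Nonempty Y := ⟨⟨b, hb⟩⟩
  have hle (x : X) : f a b ≤ ⨆ y : Y, f x y :=
    (h x x.2 b hb).trans (le_ciSup (hbdd x x.2) ⟨b, hb⟩)
  refine le_antisymm ?_ (le_ciInf hle)
  exact (ciInf_le ⟨f a b, forall_mem_range.2 hle⟩ ⟨a, ha⟩).trans
    (ciSup_le fun y ↦ h a ha y y.2)

theorem ciSup_ciInf_eq (ha : a ∈ X) (hb : b ∈ Y) (h : IsSaddlePointOn X Y f a b)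
    (hbdd : ∀ y ∈ Y, BddBelow (range fun x : X ↦ f x y)) :
    ⨆ y : Y, ⨅ x : X, f x y = f a b := by
  have : Nonempty X := ⟨⟨a, ha⟩⟩
  have : Nonempty Y := ⟨⟨b, hb⟩⟩
  have hle (y : Y) : ⨅ x : X, f x y ≤ f a b :=
    (ciInf_le (hbdd y y.2) ⟨a, ha⟩).trans (h a ha y y.2)
  refine le_antisymm (ciSup_le hle) ?_
  exact (le_ciInf fun x : X ↦ h x x.2 b hb).trans
    (le_ciSup ⟨f a b, forall_mem_range.2 hle⟩ ⟨b, hb⟩)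

end IsSaddlePointOn

section stdSimplex

variable {ι : Type*} [Fintype ι]

theorem dotProduct_le_iSup {p : ι → ℝ} (hp : p ∈ stdSimplex ℝ ι) (v : ι → ℝ) :
    p ⬝ᵥ v ≤ ⨆ i, v i :=
  calc p ⬝ᵥ v = ∑ i, p i * v i := rfl
    _ ≤ ∑ i, p i * ⨆ j, v j := Finset.sum_le_sum fun i _ ↦
        mul_le_mul_of_nonneg_left (le_ciSup (Finite.bddAbove_range v) i) (hp.1 i)
    _ = ⨆ j, v j := by rw [← Finset.sum_mul, hp.2, one_mul]

theorem bddAbove_range_dotProduct (v : ι → ℝ) :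
    BddAbove (range fun p : stdSimplex ℝ ι ↦ (p : ι → ℝ) ⬝ᵥ v) :=
  ⟨⨆ i, v i, forall_mem_range.2 fun p ↦ dotProduct_le_iSup p.2 v⟩

theorem bddBelow_range_dotProduct (v : ι → ℝ) :
    BddBelow (range fun p : stdSimplex ℝ ι ↦ (p : ι → ℝ) ⬝ᵥ v) := by
  refine ⟨-⨆ i, -v i, forall_mem_range.2 fun p ↦ ?_⟩
  have := dotProduct_le_iSup p.2 (-v)
  rw [dotProduct_neg] at this
  exact neg_le.1 this

theorem iSup_dotProduct_eq_iSup_apply [Nonempty ι] [DecidableEq ι] {S : Set (ι → ℝ)}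
    (hS : S ⊆ stdSimplex ℝ ι) (hsingle : ∀ i, Pi.single i 1 ∈ S) (v : ι → ℝ) :
    ⨆ p : S, (p : ι → ℝ) ⬝ᵥ v = ⨆ i, v i := by
  have : Nonempty S := ⟨⟨_, hsingle (Classical.arbitrary ι)⟩⟩
  refine le_antisymm (ciSup_le fun p ↦ dotProduct_le_iSup (hS p.2) v) (ciSup_le fun i ↦ ?_)
  have hbdd : BddAbove (range fun p : S ↦ (p : ι → ℝ) ⬝ᵥ v) :=
    ⟨⨆ i, v i, forall_mem_range.2 fun p ↦ dotProduct_le_iSup (hS p.2) v⟩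
  simpa only [single_one_dotProduct] using le_ciSup hbdd ⟨_, hsingle i⟩

end stdSimplex

namespace Matrix

variable {ι κ : Type*} [Fintype ι] [Fintype κ] [Nonempty ι] [Nonempty κ]

theorem exists_isSaddlePointOn_stdSimplex (A : Matrix ι κ ℝ) :
    ∃ q ∈ stdSimplex ℝ κ, ∃ p ∈ stdSimplex ℝ ι,
      IsSaddlePointOn (stdSimplex ℝ κ) (stdSimplex ℝ ι) (fun q p ↦ p ⬝ᵥ A *ᵥ q) q p := by
  classical
  have hlin (p : ι → ℝ) (q : κ → ℝ) : p ⬝ᵥ A *ᵥ q = toLinearMap₂' ℝ A p q :=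
    (toLinearMap₂'_apply' A p q).symm
  simp only [hlin]
  refine Sion.exists_isSaddlePointOn ⟨_, single_mem_stdSimplex ℝ (Classical.arbitrary κ)⟩
    (convex_stdSimplex ℝ κ) (isCompact_stdSimplex ℝ κ) (fun p _ ↦ ?_) (fun p _ ↦ ?_)
    (convex_stdSimplex ℝ ι) ⟨_, single_mem_stdSimplex ℝ (Classical.arbitrary ι)⟩
    (isCompact_stdSimplex ℝ ι) (fun q _ ↦ ?_) (fun q _ ↦ ?_)
  · exact (by fun_prop : Continuous (toLinearMap₂' ℝ A p)).lowerSemicontinuous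
      |>.lowerSemicontinuousOn _
  · exact ((toLinearMap₂' ℝ A p).convexOn (convex_stdSimplex ℝ κ)).quasiconvexOn
  · exact (by fun_prop : Continuous ((toLinearMap₂' ℝ A).flip q)).upperSemicontinuous
      |>.upperSemicontinuousOn _
  · exact (((toLinearMap₂' ℝ A).flip q).concaveOn (convex_stdSimplex ℝ ι)).quasiconcaveOn

/-- Von Neumann's minimax theorem. -/
theorem iInf_iSup_dotProduct_mulVec_eq_iSup_iInf (A : Matrix ι κ ℝ) :
    ⨅ q : stdSimplex ℝ κ, ⨆ p : stdSimplex ℝ ι, (p : ι → ℝ) ⬝ᵥ A *ᵥ (q : κ → ℝ) =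
      ⨆ p : stdSimplex ℝ ι, ⨅ q : stdSimplex ℝ κ, (p : ι → ℝ) ⬝ᵥ A *ᵥ (q : κ → ℝ) := by
  obtain ⟨q, hq, p, hp, hsaddle⟩ := A.exists_isSaddlePointOn_stdSimplex
  have hupper := hsaddle.ciInf_ciSup_eq hq hp fun q _ ↦ bddAbove_range_dotProduct (A *ᵥ q)
  have hlower := hsaddle.ciSup_ciInf_eq hq hp fun p _ ↦ by
    simp only [dotProduct_mulVec, dotProduct_comm (p ᵥ* A)]
    exact bddBelow_range_dotProduct (p ᵥ* A)
  -- `⇑p` (the `FunLike` coercion of `stdSimplex`) and `↑p` agree only up to defeq: no `rw` here.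
  exact hupper.trans hlower.symm

end Matrix

theorem productMixtures_subset_stdSimplex : productMixtures ⊆ stdSimplex ℝ (Fin 4) := by
  rintro _ ⟨p₁, ⟨h₁, h₁'⟩, p₂, ⟨h₂, h₂'⟩, rfl⟩
  have h₁'' : 0 ≤ 1 - p₁ := sub_nonneg.2 h₁'
  have h₂'' : 0 ≤ 1 - p₂ := sub_nonneg.2 h₂'
  refine ⟨fun i ↦ ?_, ?_⟩
  · fin_cases i <;> simp [prodMix, mul_nonneg, *]
  · simp only [prodMix, Fin.sum_univ_four, cons_val_zero, cons_val_one, cons_val]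
    ring

theorem single_mem_productMixtures (i : Fin 4) : Pi.single i 1 ∈ productMixtures := by
  have h₀ : (0 : ℝ) ∈ Icc 0 1 := left_mem_Icc.2 zero_le_one
  have h₁ : (1 : ℝ) ∈ Icc 0 1 := right_mem_Icc.2 zero_le_one
  fin_cases i
  exacts [⟨0, h₀, 0, h₀, by ext j; fin_cases j <;> simp [prodMix]⟩,
    ⟨0, h₀, 1, h₁, by ext j; fin_cases j <;> simp [prodMix]⟩,
    ⟨1, h₁, 0, h₀, by ext j; fin_cases j <;> simp [prodMix]⟩,
    ⟨1, h₁, 1, h₁, by ext j; fin_cases j <;> simp [prodMix]⟩]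

/-- The upper value of the product-constrained game equals the value of the
unconstrained game. -/
theorem upperValue_eq_unconstrainedValue (n : ℕ) (hn : 1 ≤ n)
    (A : Matrix (Fin 4) (Fin n) ℝ) :
    (⨅ q : stdSimplex ℝ (Fin n), ⨆ p : productMixtures,
        (p : Fin 4 → ℝ) ⬝ᵥ A.mulVec (q : Fin n → ℝ)) =
      ⨆ p : stdSimplex ℝ (Fin 4), ⨅ q : stdSimplex ℝ (Fin n),
        (p : Fin 4 → ℝ) ⬝ᵥ A.mulVec (q : Fin n → ℝ) := by
  have : Nonempty (Fin n) := ⟨⟨0, hn⟩⟩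
  rw [← A.iInf_iSup_dotProduct_mulVec_eq_iSup_iInf]
  refine iInf_congr fun q ↦ ?_
  rw [iSup_dotProduct_eq_iSup_apply productMixtures_subset_stdSimplex single_mem_productMixtures]
  exact (iSup_dotProduct_eq_iSup_apply subset_rfl (single_mem_stdSimplex ℝ) _).symm
end

section
/- Let p* = (0, 110/543, 110/543, 323/543) and q* = (0, 671/5792, 671/5792, 2225/2896), and let v = −16655514960/(181·13⁹). Then (p*, q*) is a saddle point of the matrix game with payoff matrix A: for every column index j, (p*ᵀA)ⱼ ≥ v, and for every row index i, (A q*)ᵢ ≤ v; consequently p*ᵀ A q* = v, and v is the value of the game. -/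
open Matrix

/-- The 4×4 kernel matrix of the correlated cooperative game at θ = 1/2. -/
noncomputable def kernelMatrix : Matrix (Fin 4) (Fin 4) ℝ :=
  (-(8 / 13 ^ 9 : ℝ)) •
    !![11815316, 11681780, 11681780, 11548244;
       11621229, 11427789, 11680301, 11486861;
       11621229, 11680301, 11427789, 11486861;
       11421510, 11467270, 11467270, 11513030]

/-!
`p*` is an equalizer: `p*ᵀ A` is the constant vector `v`, while `A q*` equals `v` on the support
`{SD, DS, DD}` of `p*` and is strictly smaller on `SS`. Since both vectors are mixed strategies,
`p*ᵀ A q*` is then both `≥ v` (averaging `p*ᵀ A` against `q*`) and `≤ v` (averaging `A q*` against `p*`).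
-/

section SaddlePoint

variable {𝕜 ι κ : Type*} [CommRing 𝕜] [PartialOrder 𝕜] [IsOrderedRing 𝕜] [Fintype ι] [Fintype κ]

theorem dotProduct_le_of_mem_stdSimplex {p x : ι → 𝕜} {c : 𝕜} (hp : p ∈ stdSimplex 𝕜 ι)
    (hx : ∀ i, x i ≤ c) : p ⬝ᵥ x ≤ c :=
  calc p ⬝ᵥ x = ∑ i, p i * x i := rfl
    _ ≤ ∑ i, p i * c := Finset.sum_le_sum fun i _ => mul_le_mul_of_nonneg_left (hx i) (hp.1 i)
    _ = c := by rw [← Finset.sum_mul, hp.2, one_mul]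

theorem le_dotProduct_of_mem_stdSimplex {p x : ι → 𝕜} {c : 𝕜} (hp : p ∈ stdSimplex 𝕜 ι)
    (hx : ∀ i, c ≤ x i) : c ≤ p ⬝ᵥ x := by
  simpa [dotProduct_neg] using
    dotProduct_le_of_mem_stdSimplex (x := -x) (c := -c) hp fun i => neg_le_neg (hx i)

theorem dotProduct_mulVec_eq_of_isSaddlePoint {A : Matrix ι κ 𝕜} {p : ι → 𝕜} {q : κ → 𝕜} {v : 𝕜}
    (hp : p ∈ stdSimplex 𝕜 ι) (hq : q ∈ stdSimplex 𝕜 κ)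
    (hcol : ∀ j, v ≤ vecMul p A j) (hrow : ∀ i, (A *ᵥ q) i ≤ v) :
    p ⬝ᵥ A *ᵥ q = v := by
  refine le_antisymm (dotProduct_le_of_mem_stdSimplex hp hrow) ?_
  rw [dotProduct_mulVec, dotProduct_comm]
  exact le_dotProduct_of_mem_stdSimplex hq hcol

end SaddlePoint

theorem vecMul_kernelMatrix_pstar :
    vecMul ![0, 110 / 543, 110 / 543, 323 / 543] kernelMatrix =
      fun _ => -16655514960 / (181 * 13 ^ 9) := by
  ext j
  fin_cases j <;> norm_num [kernelMatrix, vecMul, dotProduct, Fin.sum_univ_succ]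

theorem kernelMatrix_mulVec_qstar :
    kernelMatrix *ᵥ ![0, 671 / 5792, 671 / 5792, 2225 / 2896] =
      ![-16766658640 / (181 * 13 ^ 9), -16655514960 / (181 * 13 ^ 9),
        -16655514960 / (181 * 13 ^ 9), -16655514960 / (181 * 13 ^ 9)] := by
  ext i
  fin_cases i <;> norm_num [kernelMatrix, mulVec, dotProduct, Fin.sum_univ_succ]

/-- `(p*, q*)` is a saddle point of the game with payoff matrix `A`, with value
`v = −16655514960/(181·13⁹)`. -/
theorem saddle_point_qstar :
    let pstar : Fin 4 → ℝ := ![0, 110 / 543, 110 / 543, 323 / 543]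
    let qstar : Fin 4 → ℝ := ![0, 671 / 5792, 671 / 5792, 2225 / 2896]
    let v : ℝ := -16655514960 / (181 * 13 ^ 9)
    (∀ j, v ≤ Matrix.vecMul pstar kernelMatrix j) ∧
      (∀ i, kernelMatrix.mulVec qstar i ≤ v) ∧
      pstar ⬝ᵥ kernelMatrix.mulVec qstar = v := by
  intro pstar qstar v
  have hp : pstar ∈ stdSimplex ℝ (Fin 4) :=
    ⟨fun i => by fin_cases i <;> norm_num [pstar], by norm_num [pstar, Fin.sum_univ_succ]⟩
  have hq : qstar ∈ stdSimplex ℝ (Fin 4) :=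
    ⟨fun i => by fin_cases i <;> norm_num [qstar], by norm_num [qstar, Fin.sum_univ_succ]⟩
  have hcol : ∀ j, v ≤ vecMul pstar kernelMatrix j := fun j => by
    rw [vecMul_kernelMatrix_pstar]
  have hrow : ∀ i, (kernelMatrix *ᵥ qstar) i ≤ v := fun i => by
    rw [kernelMatrix_mulVec_qstar]
    fin_cases i <;> norm_num [v]
  exact ⟨hcol, hrow, dotProduct_mulVec_eq_of_isSaddlePoint hp hq hcol hrow⟩
end

section
/- Let p* = (0, 110/543, 110/543, 323/543) and q** = (671/5792, 0, 0, 5121/5792), and let v = −16655514960/(181·13⁹). Then (p*, q**) is a saddle point of the matrix game with payoff matrix A: for every column index j, (p*ᵀA)ⱼ ≥ v, and for every row index i, (A q**)ᵢ ≤ v; consequently p*ᵀ A q** = v. -/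
/-!
Against `p*` every pure strategy of Banker yields exactly `v`, and `q**` holds every row to `v`
except `SS`, which falls strictly below it. For mixed strategies these one-sided bounds force
`p*ᵀ A q** = v`: averaging the column bounds over `q**` gives `≥ v`, averaging the row bounds over
`p*` gives `≤ v`.
-/

open Matrix

open Finset

theorem dotProduct_mulVec_eq_of_forall_le_vecMul_of_forall_mulVec_le {m n R : Type*}
    [Fintype m] [Fintype n] [CommSemiring R] [PartialOrder R] [IsOrderedRing R]
    {A : Matrix m n R} {p : m → R} {q : n → R} {v : R}
    (hp : p ∈ stdSimplex R m) (hq : q ∈ stdSimplex R n)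
    (hcol : ∀ j, v ≤ (p ᵥ* A) j) (hrow : ∀ i, (A *ᵥ q) i ≤ v) :
    p ⬝ᵥ (A *ᵥ q) = v := by
  apply le_antisymm
  · calc p ⬝ᵥ (A *ᵥ q) = ∑ i, p i * (A *ᵥ q) i := rfl
      _ ≤ ∑ i, p i * v := sum_le_sum fun i _ => mul_le_mul_of_nonneg_left (hrow i) (hp.1 i)
      _ = v := by rw [← sum_mul, hp.2, one_mul]
  · calc v = ∑ j, v * q j := by rw [← mul_sum, hq.2, mul_one]
      _ ≤ ∑ j, (p ᵥ* A) j * q j :=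
        sum_le_sum fun j _ => mul_le_mul_of_nonneg_right (hcol j) (hq.1 j)
      _ = p ⬝ᵥ (A *ᵥ q) := (dotProduct_mulVec p A q).symm

noncomputable def pStar : Fin 4 → ℝ := ![0, 110 / 543, 110 / 543, 323 / 543]

noncomputable def qStarStar : Fin 4 → ℝ := ![671 / 5792, 0, 0, 5121 / 5792]

noncomputable def kernelValue : ℝ := -16655514960 / (181 * 13 ^ 9)

theorem pStar_mem_stdSimplex : pStar ∈ stdSimplex ℝ (Fin 4) := by
  refine ⟨fun i => ?_, ?_⟩
  · fin_cases i <;> norm_num [pStar]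
  · simp [pStar, Fin.sum_univ_four]; norm_num

theorem qStarStar_mem_stdSimplex : qStarStar ∈ stdSimplex ℝ (Fin 4) := by
  refine ⟨fun i => ?_, ?_⟩
  · fin_cases i <;> norm_num [qStarStar]
  · simp [qStarStar, Fin.sum_univ_four]; norm_num

theorem pStar_vecMul_kernelMatrix : pStar ᵥ* kernelMatrix = fun _ => kernelValue := by
  ext j
  fin_cases j <;>
    simp [pStar, kernelMatrix, kernelValue, vecMul, dotProduct, Fin.sum_univ_four] <;> norm_num

theorem kernelMatrix_mulVec_qStarStar :
    kernelMatrix *ᵥ qStarStar =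
      ![kernelValue - 111143680 / (181 * 13 ^ 9), kernelValue, kernelValue, kernelValue] := by
  ext i
  fin_cases i <;>
    simp [qStarStar, kernelMatrix, kernelValue, mulVec, dotProduct, Fin.sum_univ_four] <;> norm_num

/-- `(p*, q**)` is a saddle point of the game with payoff matrix `A`, with value
`v = −16655514960/(181·13⁹)`. -/
theorem saddle_point_qstarstar :
    let pstar : Fin 4 → ℝ := ![0, 110 / 543, 110 / 543, 323 / 543]
    let qstarstar : Fin 4 → ℝ := ![671 / 5792, 0, 0, 5121 / 5792]
    let v : ℝ := -16655514960 / (181 * 13 ^ 9)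
    (∀ j, v ≤ Matrix.vecMul pstar kernelMatrix j) ∧
      (∀ i, kernelMatrix.mulVec qstarstar i ≤ v) ∧
      pstar ⬝ᵥ kernelMatrix.mulVec qstarstar = v := by
  have hcol : ∀ j, kernelValue ≤ (pStar ᵥ* kernelMatrix) j := by
    simp [pStar_vecMul_kernelMatrix]
  have hrow : ∀ i, (kernelMatrix *ᵥ qStarStar) i ≤ kernelValue := by
    intro i
    rw [kernelMatrix_mulVec_qStarStar]
    fin_cases i <;> norm_num
  exact ⟨hcol, hrow, dotProduct_mulVec_eq_of_forall_le_vecMul_of_forall_mulVec_le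
    pStar_mem_stdSimplex qStarStar_mem_stdSimplex hcol hrow⟩
end

section
/- Let p* = (√245569 − 319)/224 and let r = ((1−p*)², (1−p*)p*, p*(1−p*), p*²) ∈ ℝ⁴. Then r ᵀ A has all four coordinates equal to v̲ = 5(260493·√245569 − 1933207795)/(98·13⁹); that is, the independent product strategy with p₁ = p₂ = p* equalizes Banker's four pure strategies, and the common payoff v̲ is the lower value of the game at θ = 1/2. -/
open Matrix

/-! Against the product strategy in which each Player plays `D` with probability `p`, Banker's
four payoffs are quadratics in `p`. Those of SD and DS coincide by the symmetry of the two Players,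
and those of SS and DD differ from them by opposite multiples of `q(p) = 112 p² + 319 p − 321`,
whose positive root is `p*`. The common value follows by reducing `p*²` with `q(p*) = 0`. -/

/-- Each Player plays `D` independently with probability `p`. -/
def productStrategy (p : ℝ) : Fin 4 → ℝ :=
  ![(1 - p) * (1 - p), (1 - p) * p, p * (1 - p), p * p]

lemma vecMul_productStrategy_kernelMatrix (p : ℝ) (j : Fin 4) :
    vecMul (productStrategy p) kernelMatrix j =
      -(8 / 13 ^ 9) * (40960 * p ^ 2 - 255470 * p + 11681780 +
        416 * ![-1, 0, 0, 1] j * (112 * p ^ 2 + 319 * p - 321)) := by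
  fin_cases j <;>
    simp only [vecMul, dotProduct, Fin.sum_univ_four, productStrategy, kernelMatrix,
      Matrix.smul_apply, of_apply, smul_eq_mul, cons_val', cons_val, cons_val_zero, cons_val_one,
      cons_val_fin_one, Fin.isValue, Fin.zero_eta, Fin.mk_one, Fin.reduceFinMk] <;>
    ring

lemma vecMul_productStrategy_kernelMatrix_of_root {p : ℝ}
    (hp : 112 * p ^ 2 + 319 * p - 321 = 0) (j : Fin 4) :
    vecMul (productStrategy p) kernelMatrix j =
      -(8 / 13 ^ 9) * (40960 * p ^ 2 - 255470 * p + 11681780) := by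
  rw [vecMul_productStrategy_kernelMatrix, hp]
  ring

lemma quadratic_root_eq_zero :
    112 * ((√245569 - 319) / 224) ^ 2 + 319 * ((√245569 - 319) / 224) - 321 = 0 := by
  have hdiscrim : discrim (112 : ℝ) 319 (-321) = √245569 * √245569 := by
    rw [Real.mul_self_sqrt (by norm_num)]
    norm_num [discrim]
  have hroot := (quadratic_eq_zero_iff (by norm_num) hdiscrim ((√245569 - 319) / 224)).2
    (Or.inl (by ring))
  linear_combination hroot

/-- The independent product strategy with `p₁ = p₂ = (√245569 − 319)/224`
equalizes Banker's four pure strategies, with common payoff equal to the lower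
value `5(260493·√245569 − 1933207795)/(98·13⁹)`. -/
theorem equalizing_product_strategy :
    let pstar : ℝ := (Real.sqrt 245569 - 319) / 224
    let r : Fin 4 → ℝ :=
      ![(1 - pstar) * (1 - pstar), (1 - pstar) * pstar,
        pstar * (1 - pstar), pstar * pstar]
    let vlow : ℝ := 5 * (260493 * Real.sqrt 245569 - 1933207795) / (98 * 13 ^ 9)
    ∀ j, Matrix.vecMul r kernelMatrix j = vlow := by
  intro pstar r vlow j
  have hsqrt : √245569 ^ 2 = (245569 : ℝ) := Real.sq_sqrt (by norm_num)
  calc vecMul (productStrategy pstar) kernelMatrix j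
      = -(8 / 13 ^ 9) * (40960 * pstar ^ 2 - 255470 * pstar + 11681780) :=
        vecMul_productStrategy_kernelMatrix_of_root quadratic_root_eq_zero j
    _ = vlow := by
        simp only [pstar, vlow]
        linear_combination (-(8 / 13 ^ 9) * 40960 / 224 ^ 2 : ℝ) * hsqrt
end

section
/- The real number 5(260493·√245569 − 1933207795)/(98·13⁹) is strictly less than −16655514960/(181·13⁹). (Hence at θ = 1/2 the lower value of the independence-constrained cooperative game, approximately −0.00867999, is strictly smaller than the upper value, approximately −0.008677394, so the independent cooperative equilibrium does not exist at θ = 1/2.) -/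
/-! Clearing the denominators, the inequality is linear in `√245569` and amounts to
`√245569 < 270209 / 543 ≈ 497.6`; since `496 ^ 2 = 246016 > 245569`, the bound `√245569 < 496`
already suffices. -/

lemma sqrt_245569_lt_496 : Real.sqrt 245569 < 496 := by
  rw [Real.sqrt_lt' (by norm_num)]
  norm_num

/-- At θ = 1/2 the lower value of the independence-constrained cooperative game
is strictly smaller than the upper (correlated cooperative) value. -/
theorem lowerValue_lt_upperValue :
    5 * (260493 * Real.sqrt 245569 - 1933207795) / (98 * 13 ^ 9)
      < (-16655514960 : ℝ) / (181 * 13 ^ 9) := by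
  rw [div_lt_div_iff₀ (by norm_num) (by norm_num)]
  linarith [sqrt_245569_lt_496]
end

section
/- For q ∈ ℝ⁸ define the behavioral draw probabilities b₁ = q₅ + q₆ + q₇ + q₈ (draw on (10,10,6)), b₂ = q₃ + q₄ + q₇ + q₈ (draw on (10,11,6)), b₃ = q₂ + q₄ + q₆ + q₈ (draw on (11,10,6)). Then for each of the eleven extreme Nash-equilibrium vectors q listed in the paper, one has b₂ = b₃, and there exists t ∈ [0,1] with (b₁, b₂) = t·(0, 6715965/10469888) + (1−t)·(2238655/3807232, 0); that is, all eleven equilibria induce behavioral strategies of the form (r₁, r₂, r₂) lying on the segment between the two extreme behavioral strategies (0, 6715965/10469888, 6715965/10469888) and (2238655/3807232, 0, 0). -/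
/-- The eleven extreme Nash-equilibrium Banker strategies at θ = 1/2. -/
noncomputable def extremeBankerStrategies : List (Fin 8 → ℝ) :=
  [![0, 15175619 / 33313280, 15175619 / 33313280, 0, 0, 0, 0, 1481021 / 16656640],
   ![0, 1 / 2, 4229827 / 11421696, 0, 0, 0, 1481021 / 11421696, 0],
   ![0, 4229827 / 11421696, 1 / 2, 0, 0, 1481021 / 11421696, 0, 0],
   ![0, 4705731 / 12373504, 4705731 / 12373504, 0, 1481021 / 6186752, 0, 0, 0],
   ![0, 3753923 / 10469888, 3753923 / 10469888, 1481021 / 5234944, 0, 0, 0, 0],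
   ![15175619 / 21891584, 0, 0, 0, 0, 0, 0, 6715965 / 21891584],
   ![1988135 / 3331328, 0, 0, 0, 0, 1343193 / 6662656, 1343193 / 6662656, 0],
   ![1568577 / 3807232, 0, 0, 0, 2238655 / 3807232, 0, 0, 0],
   ![3753923 / 10469888, 0, 0, 6715965 / 10469888, 0, 0, 0, 0],
   ![4229827 / 10945792, 0, 6715965 / 21891584, 0, 0, 6715965 / 21891584, 0, 0],
   ![4229827 / 10945792, 6715965 / 21891584, 0, 0, 0, 0, 6715965 / 21891584, 0]]

/-- Probability of drawing on `(10,10,6)`. -/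
noncomputable def drawProb1 (q : Fin 8 → ℝ) : ℝ := q 4 + q 5 + q 6 + q 7

/-- Probability of drawing on `(10,11,6)`. -/
noncomputable def drawProb2 (q : Fin 8 → ℝ) : ℝ := q 2 + q 3 + q 6 + q 7

/-- Probability of drawing on `(11,10,6)`. -/
noncomputable def drawProb3 (q : Fin 8 → ℝ) : ℝ := q 1 + q 3 + q 5 + q 7

/-! Every listed equilibrium satisfies, in exact arithmetic, `b₂ = b₃`, `b₁, b₂ ≥ 0` and the
intercept equation `b₁ / a + b₂ / c = 1` of the line through `(a, 0)` and `(0, c)`; a point of the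
closed first quadrant on that line is `t • (0, c) + (1 - t) • (a, 0)` with `t = b₂ / c`. -/

theorem exists_mem_Icc_of_intercept_form {a c x y : ℝ} (ha : 0 < a) (hc : 0 < c)
    (hx : 0 ≤ x) (hy : 0 ≤ y) (hline : x * c + y * a = a * c) :
    ∃ t ∈ Set.Icc (0 : ℝ) 1, x = t * 0 + (1 - t) * a ∧ y = t * c + (1 - t) * 0 := by
  have hyc : y ≤ c := le_of_mul_le_mul_left (by nlinarith) ha
  refine ⟨y / c, ⟨div_nonneg hy hc.le, (div_le_one hc).2 hyc⟩, ?_, ?_⟩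
  · field_simp
    linarith
  · field_simp
    ring

section

variable (a b c d e f g h : ℝ)

theorem drawProb1_vec : drawProb1 ![a, b, c, d, e, f, g, h] = e + f + g + h := rfl

theorem drawProb2_vec : drawProb2 ![a, b, c, d, e, f, g, h] = c + d + g + h := rfl

theorem drawProb3_vec : drawProb3 ![a, b, c, d, e, f, g, h] = b + d + f + h := rfl

end

theorem drawProbs_of_mem_extremeBankerStrategies :
    ∀ q ∈ extremeBankerStrategies,
      drawProb2 q = drawProb3 q ∧ 0 ≤ drawProb1 q ∧ 0 ≤ drawProb2 q ∧
        drawProb1 q * (6715965 / 10469888) + drawProb2 q * (2238655 / 3807232) =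
          2238655 / 3807232 * (6715965 / 10469888) := by
  simp only [extremeBankerStrategies, List.forall_mem_cons, drawProb1_vec, drawProb2_vec,
    drawProb3_vec]
  norm_num

/-- All eleven extreme Nash equilibria induce behavioral strategies of the form
`(r₁, r₂, r₂)` lying on the segment between the two extreme behavioral
strategies `(0, 6715965/10469888, 6715965/10469888)` and
`(2238655/3807232, 0, 0)`. -/
theorem behavioral_strategies_on_segment :
    ∀ q ∈ extremeBankerStrategies,
      drawProb2 q = drawProb3 q ∧
      ∃ t ∈ Set.Icc (0 : ℝ) 1,
        drawProb1 q = t * 0 + (1 - t) * (2238655 / 3807232) ∧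
        drawProb2 q = t * (6715965 / 10469888) + (1 - t) * 0 := by
  intro q hq
  obtain ⟨hsymm, h1, h2, hline⟩ := drawProbs_of_mem_extremeBankerStrategies q hq
  exact ⟨hsymm, exists_mem_Icc_of_intercept_form (by norm_num) (by norm_num) h1 h2 hline⟩
end
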